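/- arXiv:1906.11001 — 3 statements merged into one kernel-verified Lean document; each statement's English description precedes it below -/
import Mathlib

section
/- Preservation of the lake-at-rest steady state: suppose at time level n one has u^n = 0 on all edges and h_K^n + z_K = C for every cell K, with h_K^n ≥ 0. Then the scheme update gives h^{n+1} = h^n (hence h_K^{n+1} + z_K = C), p_K^{n+1} = (1/2) g (h_K^{n+1})², and the discrete momentum equation with centered interpolation h_{σ,c}^{n+1} = (1/2)(h_K^{n+1} + h_L^{n+1}) yields u^{n+1} = 0; indeed for each internal edge σ = K|L, (p_L^{n+1} - p_K^{n+1}) + g · (1/2)(h_K^{n+1} + h_L^{n+1}) · (z_L - z_K) = 0. -/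
/-- Preservation of the "lake at rest" steady state by the staggered scheme:
if `u^n = 0` and `h^n + z = C`, then the mass update leaves `h` unchanged,
the discrete pressure gradient balances the topography term (with the
centered interpolation `h_{σ,c} = (h_K + h_L)/2`), and the momentum update
gives `u^{n+1} = 0`. Internal edges `σ` have adjacent cells `cl σ`, `cr σ`;
`Conv σ` is the convection term, a sum of dual fluxes times upwind
velocities `uε` (each equal to some edge velocity `un τ`). -/
theorem lake_at_rest {ι E Ed : Type*}
    (g : ℝ) (hg : 0 < g) (δt : ℝ) (hδt : 0 < δt) (C : ℝ)
    (mK : ι → ℝ) (hmK : ∀ K, 0 < mK K)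
    (mσ : E → ℝ) (hmσ : ∀ σ, 0 < mσ σ)
    (mD : E → ℝ) (hmD : ∀ σ, 0 < mD σ)
    (EK : ι → Finset E) (Eint : Finset E) (cl cr : E → ι)
    (z : ι → ℝ)
    (hn h' pn p' : ι → ℝ) (un u' : E → ℝ)
    (hD hD' : E → ℝ) (hDpos : ∀ σ, 0 < hD' σ)
    (sgn : ι → E → ℝ) (uK : ι → E → ℝ)
    (huKdef : ∀ K σ, uK K σ = sgn K σ * un σ)
    (hface : ι → E → ℝ)
    -- mass update
    (hmass : ∀ K, h' K = hn K - δt / mK K * ∑ σ ∈ EK K, mσ σ * hface K σ * uK K σ)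
    -- pressure
    (hpn : ∀ K, pn K = 1/2 * g * (hn K)^2)
    (hp' : ∀ K, p' K = 1/2 * g * (h' K)^2)
    -- convection term: sum of dual fluxes times upwind edge velocities
    (DE : E → Finset Ed) (F : Ed → ℝ) (uε : Ed → ℝ)
    (huε : ∀ ε, ∃ τ, uε ε = un τ)
    (Conv : E → ℝ)
    (hConv : ∀ σ ∈ Eint, Conv σ = ∑ ε ∈ DE σ, F ε * uε ε)
    -- momentum update on internal edges
    (hmom : ∀ σ ∈ Eint,
      (1/δt) * (hD' σ * u' σ - hD σ * un σ) + Conv σ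
        + (mσ σ / mD σ) * (p' (cr σ) - p' (cl σ))
        + g * (1/2 * (h' (cl σ) + h' (cr σ))) * (mσ σ / mD σ) * (z (cr σ) - z (cl σ)) = 0)
    -- lake at rest data at time level n
    (hu0 : ∀ σ, un σ = 0)
    (hlake : ∀ K, hn K + z K = C)
    (hpos : ∀ K, 0 ≤ hn K) :
    (∀ K, h' K = hn K) ∧ (∀ K, h' K + z K = C)
      ∧ (∀ σ ∈ Eint,
          (p' (cr σ) - p' (cl σ))
            + g * (1/2 * (h' (cl σ) + h' (cr σ))) * (z (cr σ) - z (cl σ)) = 0)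
      ∧ (∀ σ ∈ Eint, u' σ = 0) := by

  have hh : ∀ K, h' K = hn K := by
    intro K
    rw [hmass K]
    have : ∀ σ ∈ EK K, mσ σ * hface K σ * uK K σ = 0 := by
      intro σ _; rw [huKdef, hu0]; ring
    rw [Finset.sum_congr rfl this]
    simp
  have hbal : ∀ σ ∈ Eint,
      (p' (cr σ) - p' (cl σ))
        + g * (1/2 * (h' (cl σ) + h' (cr σ))) * (z (cr σ) - z (cl σ)) = 0 := by
    intro σ hσ
    rw [hp', hp']
    simp only [hh]
    have hz : z (cr σ) - z (cl σ) = hn (cl σ) - hn (cr σ) := by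
      have := hlake (cl σ); have := hlake (cr σ); linarith
    rw [hz]; ring
  refine ⟨hh, fun K => by rw [hh]; exact hlake K, hbal, ?_⟩
  intro σ hσ
  have hm := hmom σ hσ
  have hC : Conv σ = 0 := by
    rw [hConv σ hσ]
    apply Finset.sum_eq_zero
    intro ε _
    obtain ⟨τ, hτ⟩ := huε ε
    rw [hτ, hu0]; ring
  have hb := hbal σ hσ
  have key : (1/δt) * (hD' σ * u' σ) = 0 := by
    have : (mσ σ / mD σ) * (p' (cr σ) - p' (cl σ))
        + g * (1/2 * (h' (cl σ) + h' (cr σ))) * (mσ σ / mD σ) * (z (cr σ) - z (cl σ))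
        = (mσ σ / mD σ) * ((p' (cr σ) - p' (cl σ))
            + g * (1/2 * (h' (cl σ) + h' (cr σ))) * (z (cr σ) - z (cl σ))) := by ring
    rw [hC, hu0] at hm
    rw [hb, mul_zero] at this
    linarith [hm, this]
  have h1 : hD' σ * u' σ = 0 := by
    have hδ : (1/δt) ≠ 0 := by positivity
    exact (mul_eq_zero.mp key).resolve_left hδ
  exact (mul_eq_zero.mp h1).resolve_left (ne_of_gt (hDpos σ))
end

section
/- Nonnegativity of the kinetic energy remainder under a CFL condition (1D, one dual cell): let h^{n+1} > 0, and let the convection term at the dual cell D be C = (1/|D|) Σ_ε F_ε u_ε with upwind values u_ε ∈ {u, u_ε'} chosen upwind with respect to the sign of F_ε, and Σ_ε F_ε = (|D|/δt)(h^n - h^{n+1}) (dual mass balance). Then the remainder R = (h^n/(2δt))(u^{n+1} - u^n)² + (correction terms from upwinding) in the discrete kinetic energy balance is nonnegative provided δt Σ_ε (F_ε)^- ≤ |D| h^{n+1}, where (F_ε)^- = max(-F_ε, 0). -/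
/-!
Eliminating `G` between the momentum and kinetic energy balances and using the mass balance
gives `2 δt |D| R = |D| hⁿ (uⁿ⁺¹ - uⁿ)² - δt Σ_ε F_ε (uⁿ⁺¹ - u_ε)²`. With upwinding, outgoing
fluxes contribute `F_ε⁺ (uⁿ⁺¹ - uⁿ)²` and incoming ones `-F_ε⁻ (uⁿ⁺¹ - u_{ε,out})²`; by the mass
balance `|D| hⁿ - δt Σ F_ε⁺ = |D| hⁿ⁺¹ - δt Σ F_ε⁻`, so `2 δt |D| R` is a sum of squares with
coefficients that the CFL condition makes nonnegative.
-/

open Finset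

section KineticBalance

variable {ι : Type*} [Fintype ι]

theorem kinetic_remainder_eq {δt mD hn hnp un unp G R : ℝ} {F v : ι → ℝ}
    (hδt : δt ≠ 0) (hmD : mD ≠ 0)
    (hmass : mD * (hnp - hn) + δt * ∑ ε, F ε = 0)
    (hmom : 1/δt * (hnp * unp - hn * un) + 1/mD * ∑ ε, F ε * v ε + G = 0)
    (hkin : 1/(2*δt) * (hnp * unp^2 - hn * un^2)
      + 1/(2*mD) * ∑ ε, F ε * (v ε)^2 + G * unp = -R) :
    2 * δt * mD * R = mD * hn * (unp - un)^2 - δt * ∑ ε, F ε * (unp - v ε)^2 := by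
  have hsum : ∑ ε, F ε * (unp - v ε)^2
      = unp^2 * ∑ ε, F ε - 2 * unp * ∑ ε, F ε * v ε + ∑ ε, F ε * (v ε)^2 := by
    simp only [mul_sum, ← sum_sub_distrib, ← sum_add_distrib]
    exact sum_congr rfl fun ε _ => by ring
  field_simp at hkin hmom
  linear_combination hkin - 2 * unp * hmom + unp^2 * hmass + δt * hsum

theorem mul_sub_upwind_sq (f a b c : ℝ) :
    f * (c - if 0 ≤ f then a else b)^2 = max f 0 * (c - a)^2 - max (-f) 0 * (c - b)^2 := by
  rcases le_or_gt 0 f with hf | hf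
  · simp [hf]
  · simp [not_le.mpr hf, hf.le, neg_nonneg.mpr hf.le]

theorem sum_mul_sub_upwind_sq (F a : ι → ℝ) (un c : ℝ) :
    ∑ ε, F ε * (c - if 0 ≤ F ε then un else a ε)^2
      = (∑ ε, F ε + ∑ ε, max (-F ε) 0) * (c - un)^2 - ∑ ε, max (-F ε) 0 * (c - a ε)^2 := by
  have hpos : ∀ ε, max (F ε) 0 = F ε + max (-F ε) 0 := fun ε => by
    linarith [max_zero_sub_eq_self (F ε)]
  simp only [mul_sub_upwind_sq, sum_sub_distrib, hpos, ← sum_add_distrib, sum_mul]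

end KineticBalance

theorem kinetic_remainder_nonneg_general {Ed : Type*} [Fintype Ed]
    (δt mD : ℝ) (hδt : 0 < δt) (hmD : 0 < mD)
    (hn hnp : ℝ)
    (un unp G R : ℝ)
    (F uout uε : Ed → ℝ)
    (hupw : ∀ ε, uε ε = if 0 ≤ F ε then un else uout ε)
    (hmass : mD * (hnp - hn) + δt * ∑ ε, F ε = 0)
    (hmom : 1/δt * (hnp * unp - hn * un) + 1/mD * ∑ ε, F ε * uε ε + G = 0)
    (hkin : 1/(2*δt) * (hnp * unp^2 - hn * un^2)
      + 1/(2*mD) * ∑ ε, F ε * (uε ε)^2 + G * unp = -R)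
    (CFL : δt * ∑ ε, max (-(F ε)) 0 ≤ mD * hnp) :
    0 ≤ R := by
  have key := kinetic_remainder_eq hδt.ne' hmD.ne' hmass hmom hkin
  simp only [hupw, sum_mul_sub_upwind_sq] at key
  have hsplit : 2 * δt * mD * R = (mD * hnp - δt * ∑ ε, max (-F ε) 0) * (unp - un)^2
      + δt * ∑ ε, max (-F ε) 0 * (unp - uout ε)^2 := by
    linear_combination key - (unp - un)^2 * hmass
  have hinflow : 0 ≤ ∑ ε, max (-F ε) 0 * (unp - uout ε)^2 :=
    sum_nonneg fun ε _ => mul_nonneg (le_max_right _ _) (sq_nonneg _)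
  have hscaled : 0 ≤ 2 * δt * mD * R := by
    rw [hsplit]
    exact add_nonneg (mul_nonneg (sub_nonneg.mpr CFL) (sq_nonneg _)) (mul_nonneg hδt.le hinflow)
  exact nonneg_of_mul_nonneg_right hscaled (by positivity)

/-- Nonnegativity of the kinetic energy remainder under a CFL condition, on
one dual cell with finitely many dual edges `ε`, mass fluxes `F ε`, upwind
velocities `uε ε` (equal to the local value `un` if `F ε ≥ 0` and to the
neighbouring value `uout ε` otherwise). -/
theorem kinetic_remainder_nonneg {Ed : Type*} [Fintype Ed]
    (δt mD : ℝ) (hδt : 0 < δt) (hmD : 0 < mD)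
    (hn hnp : ℝ) (hhn : 0 < hn) (hhnp : 0 < hnp)
    (un unp G R : ℝ)
    (F uout uε : Ed → ℝ)
    (hupw : ∀ ε, uε ε = if 0 ≤ F ε then un else uout ε)
    (hmass : mD * (hnp - hn) + δt * ∑ ε, F ε = 0)
    (hmom : 1/δt * (hnp * unp - hn * un) + 1/mD * ∑ ε, F ε * uε ε + G = 0)
    (hkin : 1/(2*δt) * (hnp * unp^2 - hn * un^2)
      + 1/(2*mD) * ∑ ε, F ε * (uε ε)^2 + G * unp = -R)
    (CFL : δt * ∑ ε, max (-(F ε)) 0 ≤ mD * hnp) :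
    0 ≤ R :=
  kinetic_remainder_nonneg_general δt mD hδt hmD hn hnp un unp G R F uout uε hupw hmass hmom hkin
    CFL
end

section
/- Discrete potential energy identity (algebraic core of Lemma on elastic potential balance): let g > 0 and let h_K^{n+1} = h_K^n - (δt/|K|) Σ_σ |σ| h_σ^n u_{K,σ}^n (upwind mass balance). Set E_p(h) = (1/2) g h² and p_K^n = (1/2) g (h_K^n)². Then (1/δt)(E_p(h_K^{n+1}) - E_p(h_K^n)) + (1/|K|) Σ_σ |σ| E_p(h_σ^n) u_{K,σ}^n + p_K^n · (1/|K|) Σ_σ |σ| u_{K,σ}^n = -R_K^{n+1}, where R_K^{n+1} ≥ (g/|K|) Σ_σ |σ| u_{K,σ}^n h_σ^n (h_K^{n+1} - h_K^n). -/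
/-- Algebraic core of the discrete elastic potential energy balance on one
cell `K` with edges `σ`: with `E_p(h) = (1/2) g h²`, the residual
`R_K^{n+1}` defined by the potential energy identity satisfies the lower
bound `R_K^{n+1} ≥ (g/|K|) Σ_σ |σ| u_{K,σ} h_σ (h_K^{n+1} - h_K^n)`. -/
theorem potential_energy_residual_bound {E : Type*}
    (g δt mKv : ℝ) (hg : 0 < g) (hδt : 0 < δt) (hmK : 0 < mKv)
    (edges : Finset E) (mσ : E → ℝ) (hmσ : ∀ σ ∈ edges, 0 < mσ σ)
    (u : E → ℝ) (hσ : E → ℝ) (hn hnp : ℝ)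
    (hupw : ∀ σ ∈ edges, 0 ≤ u σ → hσ σ = hn)
    (scheme : hnp = hn - δt / mKv * ∑ σ ∈ edges, mσ σ * hσ σ * u σ)
    (R : ℝ)
    (hRdef : R = -((1/δt) * (1/2 * g * hnp^2 - 1/2 * g * hn^2)
      + (1/mKv) * ∑ σ ∈ edges, mσ σ * (1/2 * g * (hσ σ)^2) * u σ
      + (1/2 * g * hn^2) * ((1/mKv) * ∑ σ ∈ edges, mσ σ * u σ))) :
    g / mKv * ∑ σ ∈ edges, mσ σ * u σ * hσ σ * (hnp - hn) ≤ R := by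
  set S : ℝ := ∑ σ ∈ edges, mσ σ * hσ σ * u σ with hS
  set T1 : ℝ := ∑ σ ∈ edges, mσ σ * (hσ σ)^2 * u σ with hT1
  set T2 : ℝ := ∑ σ ∈ edges, mσ σ * u σ with hT2
  set Q : ℝ := ∑ σ ∈ edges, mσ σ * u σ * (hσ σ - hn)^2 with hQ
  have hQexp : Q = T1 - 2 * hn * S + hn^2 * T2 := by
    rw [hQ, hT1, hS, hT2, Finset.mul_sum, Finset.mul_sum, ← Finset.sum_sub_distrib,
      ← Finset.sum_add_distrib]
    exact Finset.sum_congr rfl fun σ _ => by ring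
  have hQnonpos : Q ≤ 0 := by
    rw [hQ]
    apply Finset.sum_nonpos
    intro σ hσe
    rcases le_or_gt 0 (u σ) with h | h
    · rw [hupw σ hσe h]; simp
    · have := (hmσ σ hσe)
      have h1 : mσ σ * u σ ≤ 0 := mul_nonpos_of_nonneg_of_nonpos this.le h.le
      exact mul_nonpos_of_nonpos_of_nonneg h1 (sq_nonneg _)
  have hsum1 : ∑ σ ∈ edges, mσ σ * (1/2 * g * (hσ σ)^2) * u σ = 1/2 * g * T1 := by
    rw [hT1, Finset.mul_sum]
    exact Finset.sum_congr rfl fun σ _ => by ring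
  have hsum2 : ∑ σ ∈ edges, mσ σ * u σ * hσ σ * (hnp - hn) = S * (hnp - hn) := by
    rw [hS, Finset.sum_mul]
    exact Finset.sum_congr rfl fun σ _ => by ring
  rw [hsum2, hRdef, hsum1]
  have hδ : hnp - hn = -(δt / mKv) * S := by rw [scheme]; ring
  have hRval : -((1/δt) * (1/2 * g * hnp^2 - 1/2 * g * hn^2)
      + 1/mKv * (1/2 * g * T1) + (1/2 * g * hn^2) * ((1/mKv) * T2))
      = g / mKv * (S * (hnp - hn)) + g * δt / (2 * mKv^2) * S^2
        - g / (2 * mKv) * Q := by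
    rw [hQexp, scheme]
    field_simp
    ring
  rw [hRval]
  have h1 : 0 ≤ g * δt / (2 * mKv^2) * S^2 := by positivity
  have h2 : 0 ≤ - (g / (2 * mKv) * Q) := by
    have : 0 < g / (2 * mKv) := by positivity
    nlinarith
  linarith
end
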